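/- arXiv:1804.07132 — 3 statements merged into one kernel-verified Lean document; each statement's English description precedes it below -/
import Mathlib

section
/- Let H be a hypergraph satisfying condition (C): for any n ≥ 1 and any hyperedges β of dimension n+1, α of dimension n, γ of dimension n−1 in H with γ < α < β, there exists a hyperedge α' ∈ H of dimension n with α' ≠ α and γ < α' < β. Let f be a discrete Morse function on H. Then for any hyperedge α of H, it is not possible that simultaneously (A) there exists β > α of one higher dimension in H with f(β) ≤ f(α), and (B) there exists γ < α of one lower dimension in H with f(γ) ≥ f(α). -/
/-- A hypergraph: every hyperedge is a nonempty finite set of vertices. -/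
def IsHypergraph {V : Type*} [LinearOrder V] (H : Set (Finset V)) : Prop :=
  ∀ e ∈ H, e.Nonempty

/-- A discrete Morse function on a hypergraph `H`. -/
def IsDMF {V : Type*} [LinearOrder V] (H : Set (Finset V)) (f : Finset V → ℝ) : Prop :=
  ∀ α ∈ H,
    Set.Subsingleton {β : Finset V | β ∈ H ∧ α ⊂ β ∧ β.card = α.card + 1 ∧ f β ≤ f α} ∧
    Set.Subsingleton {γ : Finset V | γ ∈ H ∧ γ ⊂ α ∧ γ.card + 1 = α.card ∧ f α ≤ f γ}

/-- Condition (C): for any hyperedges `γ < α < β` of `H` of consecutive dimensions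
(`dim γ = n-1`, `dim α = n`, `dim β = n+1`, `n ≥ 1`), there is another hyperedge
`α' ≠ α` of dimension `n` with `γ < α' < β`. -/
def CondC {V : Type*} [LinearOrder V] (H : Set (Finset V)) : Prop :=
  ∀ β α γ : Finset V, β ∈ H → α ∈ H → γ ∈ H → γ.Nonempty →
    γ ⊂ α → α ⊂ β → β.card = α.card + 1 → α.card = γ.card + 1 →
    ∃ α' ∈ H, α' ≠ α ∧ γ ⊂ α' ∧ α' ⊂ β ∧ α'.card = α.card

/-- If `H` satisfies condition (C) and `f` is a discrete Morse function on `H`, then no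
hyperedge `α` can simultaneously satisfy (A) (some cofacet `β` in `H` with `f β ≤ f α`)
and (B) (some facet `γ` in `H` with `f γ ≥ f α`). -/
theorem condC_not_A_and_B {V : Type*} [LinearOrder V] (H : Set (Finset V))
    (hH : IsHypergraph H) (hC : CondC H) (f : Finset V → ℝ) (hf : IsDMF H f) :
    ∀ α ∈ H,
      ¬ ((∃ β ∈ H, α ⊂ β ∧ β.card = α.card + 1 ∧ f β ≤ f α) ∧
         (∃ γ ∈ H, γ ⊂ α ∧ γ.card + 1 = α.card ∧ f α ≤ f γ)) := by
  rintro α hα ⟨⟨β, hβ, hαβ, hcβ, hfβ⟩, ⟨γ, hγ, hγα, hcγ, hfγ⟩⟩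
  obtain ⟨α', hα', hne, hγα', hα'β, hcα'⟩ :=
    hC β α γ hβ hα hγ (hH γ hγ) hγα hαβ hcβ hcγ.symm
  have h1 : ¬ f α' ≤ f γ := by
    intro hle
    exact hne ((hf γ hγ).1 ⟨hα', hγα', by omega, hle⟩ ⟨hα, hγα, hcγ.symm, hfγ⟩)
  have h2 : f β ≤ f α' := le_trans (le_trans hfβ hfγ) (le_of_not_ge h1)
  exact hne ((hf β hβ).2 ⟨hα', hα'β, by omega, h2⟩ ⟨hα, hαβ, by omega, hfβ⟩)
end

section
/- Regard a discrete gradient vector field V on a hypergraph H as an R-linear map V : R(H)_n → R(H)_{n+1} sending α to −⟨∂β,α⟩β when {α < β} ∈ V and to 0 otherwise, where ⟨∂β,α⟩ = ±1 is the incidence number. Then V is proper (each hyperedge appears in at most one pair) if and only if V ∘ V = 0 as a linear map. -/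
/-- A discrete gradient vector field on a hypergraph `H`: a collection of pairs
`α < β` of hyperedges with `dim β = dim α + 1`, admitting no nontrivial closed V-path
`α₀, β₀, α₁, β₁, …, α_r, β_r, α_{r+1} = α₀` where each `(α_i, β_i)` is a pair of `W` and
`α_{i+1} ≠ α_i` is a codimension-one face of `β_i`. -/
def IsGVF {V : Type*} [LinearOrder V] (H : Set (Finset V))
    (W : Set (Finset V × Finset V)) : Prop :=
  (∀ p ∈ W, p.1 ∈ H ∧ p.2 ∈ H ∧ p.1 ⊂ p.2 ∧ p.2.card = p.1.card + 1) ∧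
  ¬ ∃ (r : ℕ) (α β : ℕ → Finset V),
      (∀ i ≤ r, (α i, β i) ∈ W ∧ α (i + 1) ≠ α i ∧ α (i + 1) ⊂ β i ∧
        (β i).card = (α (i + 1)).card + 1) ∧
      α (r + 1) = α 0

/-- A proper discrete gradient vector field: every hyperedge appears in at most one pair. -/
def IsProperGVF {V : Type*} [LinearOrder V] (W : Set (Finset V × Finset V)) : Prop :=
  ∀ p ∈ W, ∀ q ∈ W, p ≠ q → p.1 ≠ q.1 ∧ p.1 ≠ q.2 ∧ p.2 ≠ q.1 ∧ p.2 ≠ q.2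

/-- The incidence number `⟨∂β, α⟩` of a codimension-one face `α` of `β` (the simplicial sign
determined by the position of the removed vertex in the ordering of the vertices of `β`). -/
def incid {V : Type*} [LinearOrder V] (b a : Finset V) : ℤ :=
  ∑ v ∈ b \ a, (-1 : ℤ) ^ ((a.filter (fun x => x < v)).card)

/-!
The pairs of a gradient vector field have unit incidence numbers, so the map `W` sends the
generator `α` to a unit multiple of `β` exactly when `(α, β)` is a pair. Hence `W ∘ W` kills every
generator precisely when no pair `(α, β)` is followed by a pair `(β, γ)`. Properness amounts to
that together with two uniqueness statements: a hyperedge is the lower end of at most one pair,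
because `W` is a map, and the upper end of at most one pair, because two pairs `(α, β)`, `(α', β)`
would form the closed V-path `α, β, α', β, α`.
-/

section

variable {V : Type*} [LinearOrder V]

lemma isUnit_incid {a b : Finset V} (hab : a ⊂ b) (hcard : b.card = a.card + 1) :
    IsUnit (incid b a) := by
  obtain ⟨v, hv⟩ : ∃ v, b \ a = {v} := by
    rw [← Finset.card_eq_one, Finset.card_sdiff_of_subset hab.subset, hcard,
      Nat.add_sub_cancel_left]
  rw [incid, hv, Finset.sum_singleton]
  exact (isUnit_neg_one (α := ℤ)).pow _

namespace IsGVF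

variable {H : Set (Finset V)} {Vf : Set (Finset V × Finset V)}

lemma isUnit_incid_of_mem (hgvf : IsGVF H Vf) {p : Finset V × Finset V} (hp : p ∈ Vf) :
    IsUnit (incid p.2 p.1) :=
  _root_.isUnit_incid (hgvf.1 p hp).2.2.1 (hgvf.1 p hp).2.2.2

lemma eq_of_snd_eq (hgvf : IsGVF H Vf) {p q : Finset V × Finset V} (hp : p ∈ Vf) (hq : q ∈ Vf)
    (hpq : p.2 = q.2) : p = q := by
  by_contra hne
  have hfst : p.1 ≠ q.1 := fun h => hne (Prod.ext h hpq)
  obtain ⟨-, -, hqsub, hqcard⟩ := hgvf.1 q hq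
  obtain ⟨-, -, hpsub, hpcard⟩ := hgvf.1 p hp
  refine hgvf.2 ⟨1, fun i => if Even i then p.1 else q.1, fun _ => p.2, fun i hi => ?_, by simp⟩
  interval_cases i
  · exact ⟨by simpa using hp, by simpa using hfst.symm, by simpa [hpq] using hqsub,
      by simpa [hpq] using hqcard⟩
  · exact ⟨by simpa [hpq] using hq, by simpa using hfst, by simpa using hpsub,
      by simpa using hpcard⟩

lemma isProperGVF_iff (hgvf : IsGVF H Vf) :
    IsProperGVF Vf ↔ (∀ p ∈ Vf, ∀ q ∈ Vf, p.1 = q.1 → p = q) ∧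
      ∀ p ∈ Vf, ∀ q ∈ Vf, p.2 ≠ q.1 := by
  have hne_of_snd_eq_fst : ∀ p ∈ Vf, ∀ q ∈ Vf, p.2 = q.1 → p ≠ q := by
    rintro p hp q - hpq rfl
    exact (hgvf.1 p hp).2.2.1.ne' hpq
  constructor
  · intro hproper
    refine ⟨fun p hp q hq hpq => ?_, fun p hp q hq hpq => ?_⟩
    · by_contra hne
      exact (hproper p hp q hq hne).1 hpq
    · exact (hproper p hp q hq (hne_of_snd_eq_fst p hp q hq hpq)).2.2.1 hpq
  · rintro ⟨hfst, hchain⟩ p hp q hq hne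
    exact ⟨fun h => hne (hfst p hp q hq h), fun h => hchain q hq p hp h.symm,
      hchain p hp q hq, fun h => hne (hgvf.eq_of_snd_eq hp hq h)⟩

end IsGVF

section LinearMap

variable {R : Type*} [CommRing R] {Vf : Set (Finset V × Finset V)}
  {W : (Finset V →₀ R) →ₗ[R] (Finset V →₀ R)}

lemma apply_single_fst_of_mem
    (hW1 : ∀ p ∈ Vf, W (Finsupp.single p.1 (1 : R)) =
      (-(incid p.2 p.1)) • Finsupp.single p.2 (1 : R))
    {p : Finset V × Finset V} (hp : p ∈ Vf) :
    W (Finsupp.single p.1 1) = Finsupp.single p.2 (-(incid p.2 p.1 : R)) := by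
  rw [hW1 p hp, Finsupp.smul_single, zsmul_one, Int.cast_neg]

variable [Nontrivial R]

lemma eq_of_fst_eq_of_mem (hunit : ∀ p ∈ Vf, IsUnit (incid p.2 p.1))
    (hW1 : ∀ p ∈ Vf, W (Finsupp.single p.1 (1 : R)) =
      (-(incid p.2 p.1)) • Finsupp.single p.2 (1 : R))
    {p q : Finset V × Finset V} (hp : p ∈ Vf) (hq : q ∈ Vf) (hpq : p.1 = q.1) : p = q := by
  have hsingle := apply_single_fst_of_mem hW1 hp
  rw [hpq, apply_single_fst_of_mem hW1 hq, Finsupp.single_eq_single_iff] at hsingle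
  have hcoeff : -(incid q.2 q.1 : R) ≠ 0 :=
    neg_ne_zero.mpr ((hunit q hq).map (Int.castRingHom R)).ne_zero
  obtain ⟨hsnd, -⟩ | ⟨hzero, -⟩ := hsingle
  · exact Prod.ext hpq hsnd.symm
  · exact absurd hzero hcoeff

lemma comp_self_eq_zero_iff_forall_snd_ne_fst (hunit : ∀ p ∈ Vf, IsUnit (incid p.2 p.1))
    (hW1 : ∀ p ∈ Vf, W (Finsupp.single p.1 (1 : R)) =
      (-(incid p.2 p.1)) • Finsupp.single p.2 (1 : R))
    (hW2 : ∀ s : Finset V, (∀ b : Finset V, (s, b) ∉ Vf) →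
      W (Finsupp.single s (1 : R)) = 0) :
    W ∘ₗ W = 0 ↔ ∀ p ∈ Vf, ∀ q ∈ Vf, p.2 ≠ q.1 := by
  constructor
  · rintro hcomp ⟨a, b⟩ hab ⟨b', c⟩ hbc (rfl : b = b')
    have hsq : W (W (Finsupp.single a 1)) =
        Finsupp.single c (-(incid b a : R) * -(incid c b : R)) := by
      rw [hW1 (a, b) hab, map_zsmul, apply_single_fst_of_mem hW1 hbc, Finsupp.smul_single,
        zsmul_eq_mul, Int.cast_neg]
    have hcoeff : IsUnit (-(incid b a : R) * -(incid c b : R)) :=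
      ((hunit _ hab).map (Int.castRingHom R)).neg.mul ((hunit _ hbc).map (Int.castRingHom R)).neg
    refine (Finsupp.single_ne_zero (a := c)).mpr hcoeff.ne_zero ?_
    rw [← hsq, ← LinearMap.comp_apply, hcomp, LinearMap.zero_apply]
  · intro hchain
    refine Finsupp.basisSingleOne.ext fun s => ?_
    rw [Finsupp.coe_basisSingleOne, LinearMap.comp_apply, LinearMap.zero_apply]
    by_cases hs : ∃ b, (s, b) ∈ Vf
    · obtain ⟨b, hb⟩ := hs
      have hb_lower : W (Finsupp.single b 1) = 0 :=
        hW2 b fun c hc => hchain (s, b) hb (b, c) hc rfl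
      rw [hW1 (s, b) hb, map_zsmul, hb_lower, smul_zero]
    · push Not at hs
      rw [hW2 s hs, map_zero]

end LinearMap

end

/-- A discrete gradient vector field `Vf` on a hypergraph `H`, regarded as the `R`-linear map
`W` sending `α` to `−⟨∂β,α⟩·β` when `(α, β) ∈ Vf` and to `0` otherwise, is proper if and only
if `W ∘ W = 0`. -/
theorem properGVF_iff_comp_self_eq_zero {V : Type*} [LinearOrder V]
    (R : Type*) [CommRing R] [Nontrivial R] (H : Set (Finset V))
    (Vf : Set (Finset V × Finset V)) (hgvf : IsGVF H Vf)
    (W : (Finset V →₀ R) →ₗ[R] (Finset V →₀ R))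
    (hW1 : ∀ p ∈ Vf, W (Finsupp.single p.1 (1 : R)) =
      (-(incid p.2 p.1)) • Finsupp.single p.2 (1 : R))
    (hW2 : ∀ s : Finset V, (∀ b : Finset V, (s, b) ∉ Vf) →
      W (Finsupp.single s (1 : R)) = 0) :
    IsProperGVF Vf ↔ W ∘ₗ W = 0 := by
  have hunit := fun p (hp : p ∈ Vf) => hgvf.isUnit_incid_of_mem hp
  rw [hgvf.isProperGVF_iff, comp_self_eq_zero_iff_forall_snd_ne_fst hunit hW1 hW2]
  exact and_iff_right fun p hp q hq => eq_of_fst_eq_of_mem hunit hW1 hp hq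
end

section
/- Let H, H' be hypergraphs with H' ⊆ H, and let f, f' be discrete Morse functions on H, H' respectively with f' = f|_{H'}. Then the gradient vector fields satisfy grad f' = π(H,H') ∘ grad f, where π(H,H') : R(H)_* → R(H')_* is the canonical projection sending hyperedges in H' to themselves and hyperedges in H \ H' to zero. -/
/-- `W` realizes, on the chain level, the discrete gradient vector field `grad f` of a
discrete Morse function `f` on `H`: a hyperedge `α` is sent to `−⟨∂β,α⟩·β` if some cofacet
`β ∈ H` satisfies `f β ≤ f α`, and to `0` otherwise; basis elements outside `H` are sent
to `0`. -/
def RealizesGrad {V : Type*} [LinearOrder V] (R : Type*) [CommRing R] (H : Set (Finset V))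
    (f : Finset V → ℝ) (W : (Finset V →₀ R) →ₗ[R] (Finset V →₀ R)) : Prop :=
  (∀ α ∈ H, ∀ β ∈ H, α ⊂ β → β.card = α.card + 1 → f β ≤ f α →
    W (Finsupp.single α (1 : R)) = (-(incid β α)) • Finsupp.single β (1 : R)) ∧
  (∀ α ∈ H, (¬ ∃ β ∈ H, α ⊂ β ∧ β.card = α.card + 1 ∧ f β ≤ f α) →
    W (Finsupp.single α (1 : R)) = 0) ∧
  (∀ s : Finset V, s ∉ H → W (Finsupp.single s (1 : R)) = 0)

/-- The canonical projection `π(H,H') : R(H)_* → R(H')_*`, sending a hyperedge of `H'` to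
itself and every other basis element to zero. -/
noncomputable def projS {V : Type*} [LinearOrder V] (R : Type*) [CommRing R]
    (S : Set (Finset V)) : (Finset V →₀ R) →ₗ[R] (Finset V →₀ R) :=
  open Classical in
  Finsupp.lsum R fun s =>
    if s ∈ S then LinearMap.toSpanSingleton R (Finset V →₀ R) (Finsupp.single s (1 : R))
    else 0


lemma projS_single_mem {V : Type*} [LinearOrder V] (R : Type*) [CommRing R]
    {S : Set (Finset V)} {s : Finset V} (hs : s ∈ S) :
    projS R S (Finsupp.single s (1 : R)) = Finsupp.single s (1 : R) := by
  classical
  simp [projS, Finsupp.lsum_single, hs, LinearMap.toSpanSingleton_apply]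

lemma projS_single_not_mem {V : Type*} [LinearOrder V] (R : Type*) [CommRing R]
    {S : Set (Finset V)} {s : Finset V} (hs : s ∉ S) :
    projS R S (Finsupp.single s (1 : R)) = 0 := by
  classical
  simp [projS, Finsupp.lsum_single, hs]

/-- If `H' ⊆ H` and `f' = f|_{H'}`, then `grad f' = π(H,H') ∘ grad f` on `R(H')`. -/
theorem grad_restriction {V : Type*} [LinearOrder V] (R : Type*) [CommRing R]
    (H H' : Set (Finset V)) (hsub : H' ⊆ H) (f : Finset V → ℝ)
    (hf : IsDMF H f) (hf' : IsDMF H' f)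
    (W W' : (Finset V →₀ R) →ₗ[R] (Finset V →₀ R))
    (hW : RealizesGrad R H f W) (hW' : RealizesGrad R H' f W') :
    ∀ α ∈ H', W' (Finsupp.single α (1 : R)) = projS R H' (W (Finsupp.single α (1 : R))) := by
  intro α hα'
  have hαH := hsub hα'
  by_cases h : ∃ β ∈ H', α ⊂ β ∧ β.card = α.card + 1 ∧ f β ≤ f α
  · obtain ⟨β, hβ', hss, hcard, hle⟩ := h
    rw [hW'.1 α hα' β hβ' hss hcard hle, hW.1 α hαH β (hsub hβ') hss hcard hle,
      map_zsmul, projS_single_mem R hβ']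
  · rw [hW'.2.1 α hα' h]
    by_cases h2 : ∃ β ∈ H, α ⊂ β ∧ β.card = α.card + 1 ∧ f β ≤ f α
    · obtain ⟨β, hβ, hss, hcard, hle⟩ := h2
      have hβ' : β ∉ H' := fun hb => h ⟨β, hb, hss, hcard, hle⟩
      rw [hW.1 α hαH β hβ hss hcard hle, map_zsmul, projS_single_not_mem R hβ', smul_zero]
    · rw [hW.2.1 α hαH h2, map_zero]
end
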